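/- arXiv:math/0501037 — 2 statements merged into one kernel-verified Lean document; each statement's English description precedes it below -/
import Mathlib

section
/- Let η : ℝ → ℂ be a C² function whose support is a compact subset of [0,∞) and which satisfies η(0) = 0, and let M > 0. There exists a constant C = C(η, M) such that for every x ≥ 0 and every C² function φ : [0,∞) → ℂ with |φ(λ)|, |φ'(λ)|, |φ''(λ)| ≤ M for all λ ≥ 0, one has ∫_ℝ | x ∫₀^∞ cos(uλ) e^{ixλ} η(λ) φ(λ) dλ | du ≤ C ⟨x⟩; indeed the pointwise bound | x ∫₀^∞ cos(uλ) e^{ixλ} η(λ) φ(λ) dλ | ≤ C x ( (1 + |x−u|)^{−2} + (1 + |x+u|)^{−2} ) holds uniformly in x ≥ 0 and u ∈ ℝ. -/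
/-!
Since `cos(uλ) e^{ixλ} = (e^{i(x+u)λ} + e^{i(x-u)λ}) / 2`, the inner integral is the mean of the
truncated Fourier integrals `ĝ(x ± u)` of `g = ηφ` over `[0, R]`, where `supp η ⊆ (-∞, R)`.
Integrating by parts twice, the boundary terms at `R` vanish and so does the first one at `0`
because `η(0) = 0`; what is left is `k² ĝ(k) = g'(0) + ∫₀^R e^{ikλ} g''(λ) dλ`. Together with
`|ĝ(k)| ≤ ∫₀^R |g|` this gives `|ĝ(k)| ≲ (1 + |k|)⁻²`, with a constant that the Leibniz rule bounds
by `M` times the `C²` size of `η`. The `u`-integral bound follows from `∫ (1 + |u|)⁻² du = 2`.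
-/

open MeasureTheory Complex Set Finset

theorem norm_cexp_I_mul_ofReal_mul (k t : ℝ) : ‖cexp (I * k * t)‖ = 1 := by
  simpa [mul_assoc] using norm_exp_I_mul_ofReal (k * t)

theorem hasDerivAt_cexp_I_mul_ofReal_mul (k t : ℝ) :
    HasDerivAt (fun s : ℝ => cexp (I * k * s)) (I * k * cexp (I * k * t)) t := by
  simpa [mul_comm] using ((hasDerivAt_id (t : ℂ)).const_mul (I * k)).cexp.comp_ofReal

theorem norm_integral_cexp_mul_le_integral_norm {R : ℝ} (hR : 0 ≤ R) (k : ℝ) (f : ℝ → ℂ) :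
    ‖∫ t in (0 : ℝ)..R, cexp (I * k * t) * f t‖ ≤ ∫ t in (0 : ℝ)..R, ‖f t‖ := by
  simpa only [norm_mul, norm_cexp_I_mul_ofReal_mul, one_mul] using
    intervalIntegral.norm_integral_le_integral_norm (f := fun t => cexp (I * k * t) * f t) hR

theorem I_mul_integral_cexp_mul (k R : ℝ) {w : ℝ → ℂ} (hw : ContDiff ℝ 1 w) :
    I * k * ∫ t in (0 : ℝ)..R, cexp (I * k * t) * w t
      = cexp (I * k * R) * w R - w 0 - ∫ t in (0 : ℝ)..R, cexp (I * k * t) * deriv w t := by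
  have hibp := intervalIntegral.integral_mul_deriv_eq_deriv_mul (a := 0) (b := R)
    (fun t _ => hasDerivAt_cexp_I_mul_ofReal_mul k t)
    (fun t _ => (hw.differentiable one_ne_zero t).hasDerivAt)
    ((by fun_prop : Continuous fun t : ℝ => I * k * cexp (I * k * t)).intervalIntegrable _ _)
    ((hw.continuous_deriv le_rfl).intervalIntegrable _ _)
  simp only [ofReal_zero, mul_zero, Complex.exp_zero, one_mul] at hibp
  rw [← intervalIntegral.integral_const_mul]
  simp only [← mul_assoc]
  rw [hibp]
  ring

theorem sq_mul_integral_cexp_mul_eq {g : ℝ → ℂ} (hg : ContDiff ℝ 2 g) {R : ℝ} (h0 : g 0 = 0)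
    (hR : g R = 0) (h'R : deriv g R = 0) (k : ℝ) :
    (I * k) ^ 2 * ∫ t in (0 : ℝ)..R, cexp (I * k * t) * g t
      = deriv g 0 + ∫ t in (0 : ℝ)..R, cexp (I * k * t) * deriv (deriv g) t := by
  have hg' : ContDiff ℝ 1 (deriv g) := hg.deriv' (n := 1)
  have e1 := I_mul_integral_cexp_mul k R (hg.of_le one_le_two)
  have e2 := I_mul_integral_cexp_mul k R hg'
  rw [h0, hR] at e1
  rw [h'R] at e2
  linear_combination (I * k) * e1 - e2

theorem norm_integral_cexp_mul_le {g : ℝ → ℂ} (hg : ContDiff ℝ 2 g) {R : ℝ} (hR : 0 ≤ R)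
    (h0 : g 0 = 0) (hgR : g R = 0) (hg'R : deriv g R = 0) {w : ℝ → ℝ}
    (hw : IntervalIntegrable w volume 0 R)
    (hgw : ∀ t ∈ Icc 0 R, ∀ n ≤ 2, ‖iteratedDeriv n g t‖ ≤ w t) (k : ℝ) :
    ‖∫ t in (0 : ℝ)..R, cexp (I * k * t) * g t‖
      ≤ 4 * (w 0 + ∫ t in (0 : ℝ)..R, w t) * ((1 + |k|) ^ 2)⁻¹ := by
  set J := ∫ t in (0 : ℝ)..R, cexp (I * k * t) * g t
  have hw0 : 0 ≤ w 0 := (norm_nonneg _).trans (hgw 0 ⟨le_rfl, hR⟩ 0 (by norm_num))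
  have hint : ∀ n ≤ 2, ∫ t in (0 : ℝ)..R, ‖iteratedDeriv n g t‖ ≤ ∫ t in (0 : ℝ)..R, w t :=
    fun n hn => intervalIntegral.integral_mono_on hR
      ((hg.continuous_iteratedDeriv n (by exact_mod_cast hn)).norm.intervalIntegrable _ _) hw
      fun t ht => hgw t ht n hn
  have hJ : ‖J‖ ≤ w 0 + ∫ t in (0 : ℝ)..R, w t := by
    have := hint 0 (by norm_num)
    simp only [iteratedDeriv_zero] at this
    linarith [norm_integral_cexp_mul_le_integral_norm hR k g]
  have hkJ : k ^ 2 * ‖J‖ ≤ w 0 + ∫ t in (0 : ℝ)..R, w t := by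
    have h1 := hgw 0 ⟨le_rfl, hR⟩ 1 (by norm_num)
    have h2 := hint 2 le_rfl
    simp only [iteratedDeriv_succ, iteratedDeriv_zero] at h1 h2
    calc k ^ 2 * ‖J‖ = ‖(I * k) ^ 2 * J‖ := by
          rw [norm_mul, norm_pow, norm_mul, norm_I, one_mul, norm_real, Real.norm_eq_abs, sq_abs]
      _ = ‖deriv g 0 + ∫ t in (0 : ℝ)..R, cexp (I * k * t) * deriv (deriv g) t‖ := by
          rw [sq_mul_integral_cexp_mul_eq hg h0 hgR hg'R]
      _ ≤ ‖deriv g 0‖ + ∫ t in (0 : ℝ)..R, ‖deriv (deriv g) t‖ :=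
          (norm_add_le _ _).trans (by gcongr; exact norm_integral_cexp_mul_le_integral_norm hR k _)
      _ ≤ w 0 + ∫ t in (0 : ℝ)..R, w t := add_le_add h1 h2
  rw [← div_eq_mul_inv, le_div_iff₀ (by positivity)]
  nlinarith [abs_nonneg k, norm_nonneg J, sq_nonneg (|k| - 1), sq_abs k]

theorem ofReal_cos_mul_mul_cexp (u x t : ℝ) :
    (Real.cos (u * t) : ℂ) * cexp (I * x * t)
      = (cexp (I * ↑(x + u) * t) + cexp (I * ↑(x - u) * t)) / 2 := by
  rw [ofReal_cos, Complex.cos, add_div, add_mul, div_mul_eq_mul_div, div_mul_eq_mul_div,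
    ← Complex.exp_add, ← Complex.exp_add]
  push_cast
  ring_nf

theorem integral_Ioi_cos_mul_cexp_mul_eq {g : ℝ → ℂ} (hg : Continuous g) {R : ℝ} (hR : 0 ≤ R)
    (hgR : ∀ t, R ≤ t → g t = 0) (x u : ℝ) :
    ∫ t in Ioi (0 : ℝ), (Real.cos (u * t) : ℂ) * cexp (I * x * t) * g t
      = ((∫ t in (0 : ℝ)..R, cexp (I * ↑(x + u) * t) * g t)
          + ∫ t in (0 : ℝ)..R, cexp (I * ↑(x - u) * t) * g t) / 2 := by
  have hvanish : ∀ t ∈ Ioi (0 : ℝ) \ Ioc 0 R,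
      (Real.cos (u * t) : ℂ) * cexp (I * x * t) * g t = 0 := fun t ht => by
    rw [hgR t (le_of_not_ge fun h => ht.2 ⟨ht.1, h⟩), mul_zero]
  rw [setIntegral_eq_of_subset_of_forall_sdiff_eq_zero measurableSet_Ioi Ioc_subset_Ioi_self
      hvanish, ← intervalIntegral.integral_of_le hR,
    ← intervalIntegral.integral_add ((by fun_prop : Continuous _).intervalIntegrable _ _)
      ((by fun_prop : Continuous _).intervalIntegrable _ _), ← intervalIntegral.integral_div]
  refine intervalIntegral.integral_congr fun t _ => ?_
  simp only [ofReal_cos_mul_mul_cexp]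
  ring

theorem norm_integral_Ioi_cos_mul_cexp_mul_le {g : ℝ → ℂ} (hg : ContDiff ℝ 2 g) {R : ℝ}
    (hR : 0 ≤ R) (h0 : g 0 = 0) (hgR : ∀ t, R ≤ t → g t = 0) (hg'R : deriv g R = 0)
    {w : ℝ → ℝ} (hw : IntervalIntegrable w volume 0 R)
    (hgw : ∀ t ∈ Icc 0 R, ∀ n ≤ 2, ‖iteratedDeriv n g t‖ ≤ w t) (x u : ℝ) :
    ‖∫ t in Ioi (0 : ℝ), (Real.cos (u * t) : ℂ) * cexp (I * x * t) * g t‖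
      ≤ 2 * (w 0 + ∫ t in (0 : ℝ)..R, w t)
          * (((1 + |x - u|) ^ 2)⁻¹ + ((1 + |x + u|) ^ 2)⁻¹) := by
  have hosc := norm_integral_cexp_mul_le hg hR h0 (hgR R le_rfl) hg'R hw hgw
  rw [integral_Ioi_cos_mul_cexp_mul_eq hg.continuous hR hgR, norm_div, RCLike.norm_ofNat]
  linarith [norm_add_le (∫ t in (0 : ℝ)..R, cexp (I * ↑(x + u) * t) * g t)
    (∫ t in (0 : ℝ)..R, cexp (I * ↑(x - u) * t) * g t), hosc (x + u), hosc (x - u)]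

theorem norm_iteratedDeriv_mul_le_of_le {𝕜 A : Type*} [NontriviallyNormedField 𝕜]
    [NormedRing A] [NormedAlgebra 𝕜 A] {f g : 𝕜 → A} {N n : ℕ}
    (hf : ContDiff 𝕜 N f) (hg : ContDiff 𝕜 N g) (hn : n ≤ N) {t : 𝕜} {M : ℝ}
    (hgM : ∀ i ≤ N, ‖iteratedDeriv i g t‖ ≤ M) :
    ‖iteratedDeriv n (fun s => f s * g s) t‖
      ≤ M * ∑ i ∈ range (N + 1), (N.choose i : ℝ) * ‖iteratedDeriv i f t‖ := by
  have hM : 0 ≤ M := (norm_nonneg _).trans (hgM 0 (Nat.zero_le _))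
  calc ‖iteratedDeriv n (fun s => f s * g s) t‖
      ≤ ∑ i ∈ range (n + 1), (n.choose i : ℝ) * ‖iteratedDeriv i f t‖
          * ‖iteratedDeriv (n - i) g t‖ := by
        simpa only [norm_iteratedFDeriv_eq_norm_iteratedDeriv] using
          norm_iteratedFDeriv_mul_le hf hg t (n := n) (by exact_mod_cast hn)
    _ ≤ ∑ i ∈ range (n + 1), (N.choose i : ℝ) * ‖iteratedDeriv i f t‖ * M := by
        gcongr with i hi
        exact hgM _ (by omega)
    _ ≤ ∑ i ∈ range (N + 1), (N.choose i : ℝ) * ‖iteratedDeriv i f t‖ * M :=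
        sum_le_sum_of_subset_of_nonneg (range_subset_range.2 (by omega))
          (fun _ _ _ => by positivity)
    _ = M * ∑ i ∈ range (N + 1), (N.choose i : ℝ) * ‖iteratedDeriv i f t‖ := by
        rw [mul_sum]; exact sum_congr rfl fun _ _ => by ring

theorem HasCompactSupport.exists_pos_forall_le_notMem_tsupport {E : Type*} [Zero E]
    {f : ℝ → E} (hf : HasCompactSupport f) : ∃ R, 0 < R ∧ ∀ t, R ≤ t → t ∉ tsupport f := by
  obtain ⟨b, hb⟩ := hf.isCompact.bddAbove
  refine ⟨max b 0 + 1, by positivity, fun t ht hmem => ?_⟩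
  linarith [hb hmem, le_max_left b 0]

theorem integrable_inv_one_add_abs_sq : Integrable fun u : ℝ => ((1 + |u|) ^ 2)⁻¹ := by
  refine integrable_inv_one_add_sq.mono' (by fun_prop) (ae_of_all _ fun u => ?_)
  rw [Real.norm_of_nonneg (by positivity)]
  gcongr
  nlinarith [abs_nonneg u, sq_abs u]

theorem integral_inv_one_add_abs_sq : ∫ u : ℝ, ((1 + |u|) ^ 2)⁻¹ = 2 := by
  have hderiv : ∀ t ∈ Ici (0 : ℝ), HasDerivAt (fun s : ℝ => -(1 + s)⁻¹) ((1 + t) ^ 2)⁻¹ t := by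
    intro t ht
    have h : 1 + t ≠ 0 := by have : (0 : ℝ) ≤ t := ht; positivity
    have h1 : HasDerivAt (fun s : ℝ => 1 + s) 1 t := (hasDerivAt_id' t).const_add 1
    simpa [inv_pow, neg_div] using (h1.fun_inv h).fun_neg
  have hlim : Filter.Tendsto (fun s : ℝ => -(1 + s)⁻¹) Filter.atTop (nhds 0) := by
    simpa using (Filter.tendsto_atTop_add_const_left _ 1
      (Filter.tendsto_id (α := ℝ))).inv_tendsto_atTop.neg
  rw [integral_comp_abs (f := fun t => ((1 + t) ^ 2)⁻¹),
    integral_Ioi_of_hasDerivAt_of_nonneg' hderiv (fun t _ => by positivity) hlim]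
  norm_num

theorem integral_le_of_norm_le_inv_one_add_abs_sq {F : ℝ → ℝ} {A : ℝ} (x : ℝ)
    (hF : ∀ u, ‖F u‖ ≤ A * (((1 + |x - u|) ^ 2)⁻¹ + ((1 + |x + u|) ^ 2)⁻¹)) :
    ∫ u, F u ≤ 4 * A := by
  have hsub : Integrable fun u : ℝ => ((1 + |x - u|) ^ 2)⁻¹ := by
    simpa only [abs_sub_comm x] using integrable_inv_one_add_abs_sq.comp_sub_right x
  have hadd : Integrable fun u : ℝ => ((1 + |x + u|) ^ 2)⁻¹ :=
    integrable_inv_one_add_abs_sq.comp_add_left x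
  have hval_sub : ∫ u : ℝ, ((1 + |x - u|) ^ 2)⁻¹ = 2 :=
    (integral_sub_left_eq_self (fun u : ℝ => ((1 + |u|) ^ 2)⁻¹) volume x).trans
      integral_inv_one_add_abs_sq
  have hval_add : ∫ u : ℝ, ((1 + |x + u|) ^ 2)⁻¹ = 2 :=
    (integral_add_left_eq_self (fun u : ℝ => ((1 + |u|) ^ 2)⁻¹) x).trans
      integral_inv_one_add_abs_sq
  calc ∫ u, F u ≤ ‖∫ u, F u‖ := Real.le_norm_self _
    _ ≤ ∫ u, A * (((1 + |x - u|) ^ 2)⁻¹ + ((1 + |x + u|) ^ 2)⁻¹) :=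
        norm_integral_le_of_norm_le ((hsub.add hadd).const_mul A) (ae_of_all _ hF)
    _ = 4 * A := by
        rw [integral_const_mul, integral_add hsub hadd, hval_sub, hval_add]
        ring

theorem stmt_11_general (η : ℝ → ℂ) (hη : ContDiff ℝ 2 η) (hηc : HasCompactSupport η)
    (hη0 : η 0 = 0) (M : ℝ) :
    ∃ C : ℝ, ∀ x : ℝ, 0 ≤ x → ∀ φ : ℝ → ℂ, ContDiff ℝ 2 φ →
      (∀ lam : ℝ, 0 ≤ lam →
        ‖φ lam‖ ≤ M ∧ ‖deriv φ lam‖ ≤ M ∧ ‖deriv (deriv φ) lam‖ ≤ M) →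
      (∀ u : ℝ,
        ‖(x : ℂ) * ∫ lam in Set.Ioi (0 : ℝ),
            ((Real.cos (u * lam) : ℝ) : ℂ) * Complex.exp (Complex.I * (x : ℂ) * (lam : ℂ)) *
              η lam * φ lam‖
          ≤ C * x * (((1 + |x - u|) ^ 2)⁻¹ + ((1 + |x + u|) ^ 2)⁻¹)) ∧
      (∫ u : ℝ,
          ‖(x : ℂ) * ∫ lam in Set.Ioi (0 : ℝ),
              ((Real.cos (u * lam) : ℝ) : ℂ) * Complex.exp (Complex.I * (x : ℂ) * (lam : ℂ)) *
                η lam * φ lam‖)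
        ≤ C * Real.sqrt (1 + x ^ 2) := by
  obtain ⟨R, hR, hRη⟩ := hηc.exists_pos_forall_le_notMem_tsupport
  set w : ℝ → ℝ := fun t => M * ∑ i ∈ range 3, (Nat.choose 2 i : ℝ) * ‖iteratedDeriv i η t‖
  set B := w 0 + ∫ t in (0 : ℝ)..R, w t
  refine ⟨8 * B, fun x hx φ hφ hφM => ?_⟩
  have hM : 0 ≤ M := (norm_nonneg _).trans (hφM 0 le_rfl).1
  have hw : Continuous w := continuous_const.mul <| continuous_finsetSum _ fun i hi =>
    continuous_const.mul
      (hη.continuous_iteratedDeriv i (by exact_mod_cast Nat.le_of_lt_succ (mem_range.1 hi))).norm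
  have hB : 0 ≤ B :=
    add_nonneg (by positivity) (intervalIntegral.integral_nonneg hR.le fun t _ => by positivity)
  have hgw : ∀ t ∈ Icc 0 R, ∀ n ≤ 2, ‖iteratedDeriv n (fun s => η s * φ s) t‖ ≤ w t :=
    fun t ht n hn => norm_iteratedDeriv_mul_le_of_le hη hφ hn fun i hi => by
      interval_cases i <;> simp [iteratedDeriv_succ, hφM t ht.1]
  have hgR : ∀ t, R ≤ t → t ∉ tsupport fun s => η s * φ s :=
    fun t ht h => hRη t ht (tsupport_mul_subset_left h)
  have hpt : ∀ u, ‖(x : ℂ) * ∫ lam in Ioi (0 : ℝ),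
      (Real.cos (u * lam) : ℂ) * cexp (I * x * lam) * η lam * φ lam‖
        ≤ 2 * B * x * (((1 + |x - u|) ^ 2)⁻¹ + ((1 + |x + u|) ^ 2)⁻¹) := fun u => by
    simp only [mul_assoc _ (η _) (φ _), norm_mul, norm_real, Real.norm_of_nonneg hx]
    have := norm_integral_Ioi_cos_mul_cexp_mul_le (hη.mul hφ) hR.le (by simp [hη0])
      (fun t ht => image_eq_zero_of_notMem_tsupport (f := fun s => η s * φ s) (hgR t ht))
      (Function.notMem_support.1 fun h => hgR R le_rfl (support_deriv_subset h))
      (hw.intervalIntegrable _ _) hgw x u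
    linarith [mul_le_mul_of_nonneg_left this hx]
  have hx_le : x ≤ √(1 + x ^ 2) := (le_abs_self x).trans (Real.abs_le_sqrt (by linarith))
  refine ⟨fun u => (hpt u).trans ?_,
    (integral_le_of_norm_le_inv_one_add_abs_sq (A := 2 * B * x) x
      fun u => (norm_norm _).trans_le (hpt u)).trans ?_⟩
  · gcongr
    linarith
  · linarith [mul_le_mul_of_nonneg_left hx_le (by positivity : 0 ≤ 8 * B)]

/-- with `η` a `C²` function compactly supported in `[0,∞)` with `η(0) = 0`,
and `φ` a `C²` function with `φ, φ', φ''` bounded by `M` on `[0,∞)`, there is `C = C(η, M)`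
such that for all `x ≥ 0`: the pointwise bound
`|x ∫₀^∞ cos(uλ) e^{ixλ} η(λ) φ(λ) dλ| ≤ C x ((1+|x-u|)⁻² + (1+|x+u|)⁻²)` holds for all `u`,
and consequently `∫ |x ∫₀^∞ cos(uλ) e^{ixλ} η(λ) φ(λ) dλ| du ≤ C ⟨x⟩`. -/
theorem stmt_11 (η : ℝ → ℂ) (hη : ContDiff ℝ 2 η) (hηc : HasCompactSupport η)
    (hηsupp : Function.support η ⊆ Set.Ici (0 : ℝ)) (hη0 : η 0 = 0) (M : ℝ) (hM : 0 < M) :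
    ∃ C : ℝ, ∀ x : ℝ, 0 ≤ x → ∀ φ : ℝ → ℂ, ContDiff ℝ 2 φ →
      (∀ lam : ℝ, 0 ≤ lam →
        ‖φ lam‖ ≤ M ∧ ‖deriv φ lam‖ ≤ M ∧ ‖deriv (deriv φ) lam‖ ≤ M) →
      (∀ u : ℝ,
        ‖(x : ℂ) * ∫ lam in Set.Ioi (0 : ℝ),
            ((Real.cos (u * lam) : ℝ) : ℂ) * Complex.exp (Complex.I * (x : ℂ) * (lam : ℂ)) *
              η lam * φ lam‖
          ≤ C * x * (((1 + |x - u|) ^ 2)⁻¹ + ((1 + |x + u|) ^ 2)⁻¹)) ∧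
      (∫ u : ℝ,
          ‖(x : ℂ) * ∫ lam in Set.Ioi (0 : ℝ),
              ((Real.cos (u * lam) : ℝ) : ℂ) * Complex.exp (Complex.I * (x : ℂ) * (lam : ℂ)) *
                η lam * φ lam‖)
        ≤ C * Real.sqrt (1 + x ^ 2) :=
  stmt_11_general η hη hηc hη0 M
end

section
/- Let ω : ℝ → ℂ be a C² function whose support is a compact subset of [0,∞), and let M > 0. There exists a constant C = C(ω, M) such that for every x ≤ 0 and every C² function g : ℝ → ℂ with |g(μ)|, |g'(μ)|, |g''(μ)| ≤ M for all μ ∈ ℝ, one has ∫_ℝ | x ∫_{−1}^{1} ∫₀^∞ cos(uλ) e^{−iλxσ} ω(λ) g(λσ) dλ dσ | du ≤ C ⟨x⟩. -/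
/-!
Write `cos (uλ) = (e^{iuλ} + e^{-iuλ}) / 2`. Since `ω` vanishes on `(-∞, 0]`, the inner
`λ`-integral is the mean of two Fourier transforms of `h_σ(λ) = ω(λ) g(λσ)`, at the frequencies
`u - xσ` and `-u - xσ`. At frequency `a` the transform of `h_σ''` is `-a²` times that of `h_σ`,
so each is at most `K / (1 + a²)`, where `K ≥ ∫ (|h_σ| + |h_σ''|)` depends only on `ω` and `M`
because `|σ| ≤ 1`. Each Cauchy kernel `(1 + (u ∓ xσ)²)⁻¹` has `u`-integral `π`, so by Fubini the
`u`-integral is at most `2πK |x| ≤ 2πK ⟨x⟩`.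
-/

open MeasureTheory intervalIntegral
open Real Complex Set FourierTransform

section Oscillatory

variable {h : ℝ → ℂ}

lemma one_add_sq_mul_norm_fourier_le (hh : ContDiff ℝ 2 h) (hc : HasCompactSupport h) (w : ℝ) :
    (1 + (2 * π * w) ^ 2) * ‖𝓕 h w‖ ≤ ∫ t, (‖h t‖ + ‖deriv (deriv h) t‖) := by
  have hh' : ContDiff ℝ 1 (deriv h) := hh.deriv' (n := 1)
  have int0 : Integrable h := hh.continuous.integrable_of_hasCompactSupport hc
  have int1 : Integrable (deriv h) := hh'.continuous.integrable_of_hasCompactSupport hc.deriv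
  have int2 : Integrable (deriv (deriv h)) :=
    (hh'.continuous_deriv le_rfl).integrable_of_hasCompactSupport hc.deriv.deriv
  have fourier_deriv_deriv : 𝓕 (deriv (deriv h)) w = (2 * π * I * w) ^ 2 * 𝓕 h w := by
    rw [Real.fourier_deriv int1 (hh'.differentiable one_ne_zero) int2,
      Real.fourier_deriv int0 (hh.differentiable two_ne_zero) int1]
    simp only [smul_eq_mul]
    ring
  have norm_multiplier : ‖(2 * π * I * w : ℂ) ^ 2‖ = (2 * π * w) ^ 2 := by
    simp [norm_pow, mul_pow, sq_abs, abs_of_pos pi_pos]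
  rw [integral_add int0.norm int2.norm, add_mul, one_mul, ← norm_multiplier, ← norm_mul,
    ← fourier_deriv_deriv]
  exact add_le_add (VectorFourier.norm_fourierIntegral_le_integral_norm _ _ _ _ _)
    (VectorFourier.norm_fourierIntegral_le_integral_norm _ _ _ _ _)

lemma norm_integral_exp_mul_le (hh : ContDiff ℝ 2 h) (hc : HasCompactSupport h) (a : ℝ) :
    ‖∫ t : ℝ, exp (I * a * t) * h t‖ ≤ (∫ t, (‖h t‖ + ‖deriv (deriv h) t‖)) / (1 + a ^ 2) := by
  have hfourier : 𝓕 h (-a / (2 * π)) = ∫ t : ℝ, exp (I * a * t) * h t := by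
    rw [Real.fourier_real_eq_integral_exp_smul]
    congr 1 with t
    rw [smul_eq_mul]
    congr 2
    push_cast
    field_simp
  have := one_add_sq_mul_norm_fourier_le hh hc (-a / (2 * π))
  rw [hfourier, show 2 * π * (-a / (2 * π)) = -a by field_simp, neg_sq] at this
  rw [le_div_iff₀ (by positivity), mul_comm]
  exact this

end Oscillatory

section Dilation

variable {ω g : ℝ → ℂ}

lemma hasDerivAt_comp_mul_const {f : ℝ → ℂ} (σ : ℝ) {t : ℝ} (hf : DifferentiableAt ℝ f (t * σ)) :
    HasDerivAt (fun s => f (s * σ)) (σ • deriv f (t * σ)) t :=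
  hf.hasDerivAt.scomp t (hasDerivAt_mul_const σ)

lemma deriv_deriv_mul_comp_mul_const (hω : ContDiff ℝ 2 ω) (hg : ContDiff ℝ 2 g) (σ t : ℝ) :
    deriv (deriv fun s => ω s * g (s * σ)) t =
      deriv (deriv ω) t * g (t * σ) + (2 * σ) • (deriv ω t * deriv g (t * σ)) +
        σ ^ 2 • (ω t * deriv (deriv g) (t * σ)) := by
  have hω' : ContDiff ℝ 1 (deriv ω) := hω.deriv' (n := 1)
  have hg' : ContDiff ℝ 1 (deriv g) := hg.deriv' (n := 1)
  have first : deriv (fun s => ω s * g (s * σ)) =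
      fun s => deriv ω s * g (s * σ) + ω s * σ • deriv g (s * σ) := funext fun s =>
    ((hω.differentiable two_ne_zero s).hasDerivAt.mul
      (hasDerivAt_comp_mul_const σ (hg.differentiable two_ne_zero _))).deriv
  have second : HasDerivAt (fun s => deriv ω s * g (s * σ) + ω s * σ • deriv g (s * σ))
      (deriv (deriv ω) t * g (t * σ) + deriv ω t * σ • deriv g (t * σ) +
        (deriv ω t * σ • deriv g (t * σ) + ω t * σ • σ • deriv (deriv g) (t * σ))) t :=
    ((hω'.differentiable one_ne_zero t).hasDerivAt.mul
      (hasDerivAt_comp_mul_const σ (hg.differentiable two_ne_zero _))).add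
    ((hω.differentiable two_ne_zero t).hasDerivAt.mul
      ((hasDerivAt_comp_mul_const σ (hg'.differentiable one_ne_zero _)).const_smul σ))
  rw [first, second.deriv]
  simp only [Complex.real_smul]
  push_cast
  ring

lemma norm_deriv_deriv_mul_comp_mul_const_le (hω : ContDiff ℝ 2 ω) (hg : ContDiff ℝ 2 g)
    {M σ : ℝ} (hσ : |σ| ≤ 1)
    (hgM : ∀ μ, ‖g μ‖ ≤ M ∧ ‖deriv g μ‖ ≤ M ∧ ‖deriv (deriv g) μ‖ ≤ M) (t : ℝ) :
    ‖deriv (deriv fun s => ω s * g (s * σ)) t‖ ≤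
      M * (‖deriv (deriv ω) t‖ + 2 * ‖deriv ω t‖ + ‖ω t‖) := by
  obtain ⟨hg0, hg1, hg2⟩ := hgM (t * σ)
  have hσ2 : |σ ^ 2| ≤ 1 := by rw [abs_pow]; exact pow_le_one₀ (abs_nonneg σ) hσ
  have hM : 0 ≤ M := (norm_nonneg _).trans hg0
  rw [deriv_deriv_mul_comp_mul_const hω hg]
  calc _ ≤ ‖deriv (deriv ω) t‖ * ‖g (t * σ)‖ + (2 * |σ|) * (‖deriv ω t‖ * ‖deriv g (t * σ)‖) +
        |σ ^ 2| * (‖ω t‖ * ‖deriv (deriv g) (t * σ)‖) := by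
        refine norm_add₃_le.trans ?_
        simp only [norm_smul, norm_mul, Real.norm_eq_abs, abs_two, le_refl]
    _ ≤ ‖deriv (deriv ω) t‖ * M + (2 * 1) * (‖deriv ω t‖ * M) + 1 * (‖ω t‖ * M) := by gcongr
    _ = _ := by ring

lemma integral_norm_add_norm_deriv_deriv_mul_comp_mul_const_le (hω : ContDiff ℝ 2 ω)
    (hωc : HasCompactSupport ω) (hg : ContDiff ℝ 2 g) {M σ : ℝ} (hσ : |σ| ≤ 1)
    (hgM : ∀ μ, ‖g μ‖ ≤ M ∧ ‖deriv g μ‖ ≤ M ∧ ‖deriv (deriv g) μ‖ ≤ M) :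
    ∫ t, (‖ω t * g (t * σ)‖ + ‖deriv (deriv fun s => ω s * g (s * σ)) t‖) ≤
      M * ∫ t, (‖deriv (deriv ω) t‖ + 2 * ‖deriv ω t‖ + 2 * ‖ω t‖) := by
  have hh : ContDiff ℝ 2 fun s => ω s * g (s * σ) :=
    hω.mul (hg.comp (contDiff_id.mul contDiff_const))
  have hω' : ContDiff ℝ 1 (deriv ω) := hω.deriv' (n := 1)
  have hh' : ContDiff ℝ 1 (deriv fun s => ω s * g (s * σ)) := hh.deriv' (n := 1)
  have hωd : Continuous (deriv (deriv ω)) := hω'.continuous_deriv le_rfl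
  have hhd : Continuous (deriv (deriv fun s => ω s * g (s * σ))) := hh'.continuous_deriv le_rfl
  rw [← MeasureTheory.integral_const_mul]
  refine integral_mono ?_ ?_ fun t => ?_
  · exact (hh.continuous.norm.add hhd.norm).integrable_of_hasCompactSupport
      (hωc.mul_right.norm.add hωc.mul_right.deriv.deriv.norm)
  · exact ((hωd.norm.add (continuous_const.mul hω'.continuous.norm)).add
      (continuous_const.mul hω.continuous.norm)).integrable_of_hasCompactSupport
      ((hωc.deriv.deriv.norm.add hωc.deriv.norm.mul_left).add hωc.norm.mul_left) |>.const_mul M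
  · have h0 : ‖ω t * g (t * σ)‖ ≤ M * ‖ω t‖ := by
      rw [norm_mul, mul_comm]
      gcongr
      exact (hgM _).1
    have h2 := norm_deriv_deriv_mul_comp_mul_const_le hω hg hσ hgM t
    linarith

end Dilation

section CauchyKernel

noncomputable def cauchySum (b u : ℝ) : ℝ := (1 + (u - b) ^ 2)⁻¹ + (1 + (u + b) ^ 2)⁻¹

lemma cauchySum_nonneg (b u : ℝ) : 0 ≤ cauchySum b u := by
  unfold cauchySum
  positivity

lemma continuous_cauchySum : Continuous fun p : ℝ × ℝ => cauchySum p.1 p.2 := by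
  unfold cauchySum
  fun_prop (disch := intro; positivity)

lemma integral_cauchySum (b : ℝ) :
    Integrable (cauchySum b) ∧ ∫ u, cauchySum b u = 2 * π := by
  have int₁ := integrable_inv_one_add_sq.comp_sub_right b
  have int₂ := integrable_inv_one_add_sq.comp_sub_right (-b)
  have eq₁ := integral_sub_right_eq_self (μ := volume) (fun v : ℝ => (1 + v ^ 2)⁻¹) b
  have eq₂ := integral_sub_right_eq_self (μ := volume) (fun v : ℝ => (1 + v ^ 2)⁻¹) (-b)
  simp only [sub_neg_eq_add, integral_univ_inv_one_add_sq] at int₂ eq₁ eq₂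
  refine ⟨int₁.add int₂, ?_⟩
  unfold cauchySum
  rw [integral_add int₁ int₂, eq₁, eq₂]
  ring

lemma integrable_prod_cauchySum (c : ℝ) :
    Integrable (fun p : ℝ × ℝ => cauchySum (c * p.2) p.1)
      (volume.prod (volume.restrict (Ioc (-1) 1))) := by
  have hcont : Continuous fun p : ℝ × ℝ => cauchySum (c * p.2) p.1 :=
    continuous_cauchySum.comp ((continuous_const.mul continuous_snd).prodMk continuous_fst)
  rw [integrable_prod_iff' hcont.aestronglyMeasurable]
  refine ⟨ae_of_all _ fun σ => (integral_cauchySum (c * σ)).1, ?_⟩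
  simp only [Real.norm_of_nonneg (cauchySum_nonneg _ _), (integral_cauchySum _).2]
  exact integrableOn_const measure_Ioc_lt_top.ne

lemma integral_integral_cauchySum (c : ℝ) :
    ∫ u, ∫ σ in Ioc (-1) 1, cauchySum (c * σ) u = 4 * π := by
  rw [integral_integral_swap (integrable_prod_cauchySum c)]
  simp only [(integral_cauchySum _).2, setIntegral_const, Real.volume_real_Ioc, smul_eq_mul]
  norm_num
  ring

end CauchyKernel

lemma ofReal_cos_mul_mul_exp_eq (u b t : ℝ) :
    ((Real.cos (u * t) : ℝ) : ℂ) * exp (-(I * t * b)) =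
      (exp (I * ↑(u - b) * t) + exp (I * ↑(-u - b) * t)) / 2 := by
  rw [ofReal_cos, Complex.cos, div_mul_eq_mul_div, add_mul, ← Complex.exp_add, ← Complex.exp_add]
  push_cast
  ring_nf

lemma norm_integral_Ioi_cos_mul_exp_mul_le {h : ℝ → ℂ} (hh : ContDiff ℝ 2 h)
    (hc : HasCompactSupport h) (hs : Function.support h ⊆ Ici 0) (u b : ℝ) :
    ‖∫ t in Ioi 0, ((Real.cos (u * t) : ℝ) : ℂ) * exp (-(I * t * b)) * h t‖ ≤
      (∫ t, (‖h t‖ + ‖deriv (deriv h) t‖)) / 2 * cauchySum b u := by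
  have hint (a : ℝ) : Integrable fun t : ℝ => exp (I * a * t) * h t :=
    ((by fun_prop : Continuous fun t : ℝ => exp (I * a * t)).mul hh.continuous)
      |>.integrable_of_hasCompactSupport hc.mul_left
  rw [← integral_Ici_eq_integral_Ioi, setIntegral_eq_integral_of_forall_compl_eq_zero
    fun t ht => by rw [Function.notMem_support.1 fun h' => ht (hs h'), mul_zero]]
  simp only [ofReal_cos_mul_mul_exp_eq, div_mul_eq_mul_div, add_mul]
  rw [MeasureTheory.integral_div, integral_add (hint _) (hint _), norm_div, Complex.norm_ofNat]
  have h₁ := norm_integral_exp_mul_le hh hc (u - b)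
  have h₂ := norm_integral_exp_mul_le hh hc (-u - b)
  rw [show (-u - b) ^ 2 = (u + b) ^ 2 by ring] at h₂
  calc _ ≤ (‖∫ t : ℝ, exp (I * ↑(u - b) * t) * h t‖ +
          ‖∫ t : ℝ, exp (I * ↑(-u - b) * t) * h t‖) / 2 := by
        gcongr
        exact norm_add_le _ _
    _ ≤ ((∫ t, (‖h t‖ + ‖deriv (deriv h) t‖)) / (1 + (u - b) ^ 2) +
          (∫ t, (‖h t‖ + ‖deriv (deriv h) t‖)) / (1 + (u + b) ^ 2)) / 2 := by
        gcongr
    _ = _ := by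
        unfold cauchySum
        ring

lemma norm_integral_Ioi_cos_mul_exp_mul_comp_mul_const_le {ω g : ℝ → ℂ} (hω : ContDiff ℝ 2 ω)
    (hωc : HasCompactSupport ω) (hωsupp : Function.support ω ⊆ Ici 0) (hg : ContDiff ℝ 2 g)
    {M σ : ℝ} (hgM : ∀ μ, ‖g μ‖ ≤ M ∧ ‖deriv g μ‖ ≤ M ∧ ‖deriv (deriv g) μ‖ ≤ M)
    (hσ : |σ| ≤ 1) (u x : ℝ) :
    ‖∫ lam in Ioi 0, ((Real.cos (u * lam) : ℝ) : ℂ) * exp (-(I * lam * x * σ)) *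
        ω lam * g (lam * σ)‖ ≤
      M * (∫ t, (‖deriv (deriv ω) t‖ + 2 * ‖deriv ω t‖ + 2 * ‖ω t‖)) / 2 *
        cauchySum (x * σ) u := by
  have hh : ContDiff ℝ 2 fun s => ω s * g (s * σ) :=
    hω.mul (hg.comp (contDiff_id.mul contDiff_const))
  have := norm_integral_Ioi_cos_mul_exp_mul_le hh hωc.mul_right
    ((Function.support_mul_subset_left _ _).trans hωsupp) u (x * σ)
  simp only [ofReal_mul, ← mul_assoc] at this
  refine this.trans ?_
  gcongr
  · exact cauchySum_nonneg _ _
  · exact integral_norm_add_norm_deriv_deriv_mul_comp_mul_const_le hω hωc hg hσ hgM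

theorem stmt_12_general (ω : ℝ → ℂ) (hω : ContDiff ℝ 2 ω) (hωc : HasCompactSupport ω)
    (hωsupp : Function.support ω ⊆ Set.Ici (0 : ℝ)) (M : ℝ) :
    ∃ C : ℝ, ∀ x : ℝ, x ≤ 0 → ∀ g : ℝ → ℂ, ContDiff ℝ 2 g →
      (∀ μ : ℝ, ‖g μ‖ ≤ M ∧ ‖deriv g μ‖ ≤ M ∧ ‖deriv (deriv g) μ‖ ≤ M) →
      (∫ u : ℝ,
          ‖(x : ℂ) * ∫ σ in (-1 : ℝ)..1, ∫ lam in Set.Ioi (0 : ℝ),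
              ((Real.cos (u * lam) : ℝ) : ℂ) *
                Complex.exp (-(Complex.I * (lam : ℂ) * (x : ℂ) * (σ : ℂ))) *
                  ω lam * g (lam * σ)‖)
        ≤ C * Real.sqrt (1 + x ^ 2) := by
  set K := M * ∫ t, (‖deriv (deriv ω) t‖ + 2 * ‖deriv ω t‖ + 2 * ‖ω t‖)
  refine ⟨2 * π * K, fun x _ g hg hgM => ?_⟩
  have inner (u σ : ℝ) (hσ : σ ∈ Ioc (-1) 1) :=
    norm_integral_Ioi_cos_mul_exp_mul_comp_mul_const_le hω hωc hωsupp hg hgM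
      (abs_le.2 ⟨hσ.1.le, hσ.2⟩) u x
  have outer (u : ℝ) :
      ‖(x : ℂ) * ∫ σ in (-1 : ℝ)..1, ∫ lam in Ioi 0, ((Real.cos (u * lam) : ℝ) : ℂ) *
        exp (-(I * lam * x * σ)) * ω lam * g (lam * σ)‖ ≤
        |x| * (K / 2 * ∫ σ in Ioc (-1) 1, cauchySum (x * σ) u) := by
    rw [norm_mul, norm_real, Real.norm_eq_abs, ← MeasureTheory.integral_const_mul,
      ← intervalIntegral.integral_of_le (by norm_num)]
    gcongr
    refine norm_integral_le_of_norm_le (by norm_num) (ae_of_all _ (inner u)) ?_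
    exact (continuous_const.mul (continuous_cauchySum.comp
      ((continuous_const.mul continuous_id).prodMk continuous_const))).intervalIntegrable _ _
  have hK : 0 ≤ K :=
    mul_nonneg ((norm_nonneg _).trans (hgM 0).1) (integral_nonneg fun t => by positivity)
  calc _ ≤ ∫ u, |x| * (K / 2 * ∫ σ in Ioc (-1) 1, cauchySum (x * σ) u) :=
        integral_mono_of_nonneg (ae_of_all _ fun _ => norm_nonneg _)
          (((integrable_prod_cauchySum x).integral_prod_left.const_mul _).const_mul _)
          (ae_of_all _ outer)
    _ = 2 * π * K * |x| := by
        rw [MeasureTheory.integral_const_mul, MeasureTheory.integral_const_mul,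
          integral_integral_cauchySum]
        ring
    _ ≤ 2 * π * K * √(1 + x ^ 2) := by
        gcongr
        exact Real.abs_le_sqrt (by linarith)

/-- with `ω` a `C²` function compactly supported in `[0,∞)` and `g` a `C²`
function with `g, g', g''` bounded by `M`, there is `C = C(ω, M)` such that for all `x ≤ 0`,
`∫_ℝ | x ∫_{-1}^1 ∫₀^∞ cos(uλ) e^{-iλxσ} ω(λ) g(λσ) dλ dσ | du ≤ C ⟨x⟩`. -/
theorem stmt_12 (ω : ℝ → ℂ) (hω : ContDiff ℝ 2 ω) (hωc : HasCompactSupport ω)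
    (hωsupp : Function.support ω ⊆ Set.Ici (0 : ℝ)) (M : ℝ) (hM : 0 < M) :
    ∃ C : ℝ, ∀ x : ℝ, x ≤ 0 → ∀ g : ℝ → ℂ, ContDiff ℝ 2 g →
      (∀ μ : ℝ, ‖g μ‖ ≤ M ∧ ‖deriv g μ‖ ≤ M ∧ ‖deriv (deriv g) μ‖ ≤ M) →
      (∫ u : ℝ,
          ‖(x : ℂ) * ∫ σ in (-1 : ℝ)..1, ∫ lam in Set.Ioi (0 : ℝ),
              ((Real.cos (u * lam) : ℝ) : ℂ) *
                Complex.exp (-(Complex.I * (lam : ℂ) * (x : ℂ) * (σ : ℂ))) *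
                  ω lam * g (lam * σ)‖)
        ≤ C * Real.sqrt (1 + x ^ 2) :=
  stmt_12_general ω hω hωc hωsupp M
end
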